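/- Let A be a Freudenthal (hyper-Archimedean) vector lattice: an Archimedean real vector lattice such that whenever 0 ≤ x ≤ u in A, there exist finitely many positive real numbers α₁,…,α_n and components e₁,…,e_n of u (i.e. e_i ∧ (u − e_i) = 0) with x = α₁e₁ + ⋯ + α_ne_n. Then every band preserving linear operator T : A → A is order bounded; that is, every Freudenthal vector lattice is a Wickstead space. -/

import Mathlib

/-!
A band preserving `T` maps disjoint elements to disjoint elements, so
`|T u| = |T f| + |T (u - f)|` for every component `f` of `u`. Let `0 ≤ x ≤ u` be a positive
combination of components `eᵢ` of `u` and let `f` be one of them. Replacing every `eᵢ` by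
`eᵢ ⊓ f`, resp. `eᵢ ⊓ (u - f)`, splits `x` into a piece below `f` and a piece below `u - f`, and in
each piece the term of `f` has become a multiple of the new top element (`f`, resp. `0`). So
induction on the number of components, carrying a multiple `c • u` of the top element along, gives
`|T x| ≤ |T u|`, and by the Freudenthal property `T` maps `[a, b]` into `T a ± |T (b - a)|`.
-/

open Finset

section LatticeOrderedGroup

variable {A : Type*} [AddCommGroup A] [Lattice A] [IsOrderedAddMonoid A] {a b c : A}

lemma inf_add_le_inf_add_inf (ha : 0 ≤ a) (hb : 0 ≤ b) (hc : 0 ≤ c) :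
    c ⊓ (a + b) ≤ c ⊓ a + c ⊓ b := by
  set d := c ⊓ (a + b)
  have hd : d = d ⊓ a + 0 ⊔ (d - a) := by
    rw [← sub_self d, ← sub_inf]
    abel
  have h₁ : d ⊓ a ≤ c ⊓ a := inf_le_inf_right a inf_le_left
  have h₂ : 0 ⊔ (d - a) ≤ c ⊓ b :=
    sup_le (le_inf hc hb) (le_inf ((sub_le_self d ha).trans inf_le_left)
      (sub_le_iff_le_add'.2 inf_le_right))
  calc d = d ⊓ a + 0 ⊔ (d - a) := hd
    _ ≤ c ⊓ a + c ⊓ b := add_le_add h₁ h₂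

lemma inf_add_eq_inf_add_inf (ha : 0 ≤ a) (hb : 0 ≤ b) (hc : 0 ≤ c) (hbc : b ⊓ c = 0) :
    a ⊓ (b + c) = a ⊓ b + a ⊓ c := by
  refine le_antisymm (inf_add_le_inf_add_inf hb hc ha) ?_
  have h₀ : (a ⊓ b) ⊓ (a ⊓ c) = 0 :=
    le_antisymm (hbc ▸ inf_le_inf inf_le_right inf_le_right) (le_inf (le_inf ha hb) (le_inf ha hc))
  rw [← inf_add_sup, h₀, zero_add]
  exact sup_le (inf_le_inf_left a (le_add_of_nonneg_right hc))
    (inf_le_inf_left a (le_add_of_nonneg_left hb))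

lemma add_inf_eq_zero (ha : 0 ≤ a) (hb : 0 ≤ b) (hc : 0 ≤ c) (hac : a ⊓ c = 0)
    (hbc : b ⊓ c = 0) : (a + b) ⊓ c = 0 := by
  refine le_antisymm ?_ (le_inf (add_nonneg ha hb) hc)
  calc (a + b) ⊓ c = c ⊓ (a + b) := inf_comm _ _
    _ ≤ c ⊓ a + c ⊓ b := inf_add_le_inf_add_inf ha hb hc
    _ = 0 := by rw [inf_comm c a, inf_comm c b, hac, hbc, add_zero]

lemma le_of_le_add_of_inf_eq_zero (hb : 0 ≤ b) (hc : 0 ≤ c) (h : a ≤ b + c) (hac : a ⊓ c = 0) :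
    a ≤ b := by
  have ha : 0 ≤ a := hac ▸ inf_le_left
  calc a = a ⊓ (b + c) := (inf_eq_left.2 h).symm
    _ ≤ a ⊓ b + a ⊓ c := inf_add_le_inf_add_inf hb hc ha
    _ = a ⊓ b := by rw [hac, add_zero]
    _ ≤ b := inf_le_right

lemma abs_add_eq_add_abs_of_inf_eq_zero (h : |a| ⊓ |b| = 0) : |a + b| = |a| + |b| := by
  have le_abs_add : ∀ x y : A, |x| ⊓ |y| = 0 → |x| ≤ |x + y| := fun x y hxy =>
    calc |x| = |x| ⊓ |x + y + -y| := by rw [add_neg_cancel_right, inf_idem]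
      _ ≤ |x| ⊓ (|x + y| + |y|) := inf_le_inf_left _ ((abs_add_le _ _).trans_eq (by rw [abs_neg]))
      _ ≤ |x| ⊓ |x + y| + |x| ⊓ |y| :=
        inf_add_le_inf_add_inf (abs_nonneg _) (abs_nonneg _) (abs_nonneg _)
      _ ≤ |x + y| := by rw [hxy, add_zero]; exact inf_le_right
  refine le_antisymm (abs_add_le a b) ?_
  rw [← inf_add_sup, h, zero_add]
  exact sup_le (le_abs_add a b h) (add_comm a b ▸ le_abs_add b a (inf_comm |a| |b| ▸ h))

end LatticeOrderedGroup

section VectorLattice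

variable {𝕜 A : Type*} [Field 𝕜] [LinearOrder 𝕜] [IsStrictOrderedRing 𝕜]
  [AddCommGroup A] [Lattice A] [Module 𝕜 A] [IsOrderedModule 𝕜 A] {r : 𝕜} {a b : A}

lemma smul_sup_of_pos (hr : 0 < r) (a b : A) : r • (a ⊔ b) = r • a ⊔ r • b :=
  (OrderIso.smulRight hr).map_sup a b

lemma smul_inf_of_pos (hr : 0 < r) (a b : A) : r • (a ⊓ b) = r • a ⊓ r • b :=
  (OrderIso.smulRight hr).map_inf a b

variable [IsOrderedAddMonoid A]

lemma abs_smul_of_nonneg (hr : 0 ≤ r) (a : A) : |r • a| = r • |a| := by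
  rcases hr.eq_or_lt with rfl | hr
  · simp
  · change r • a ⊔ -(r • a) = r • (a ⊔ -a)
    rw [smul_sup_of_pos hr, smul_neg]

lemma smul_inf_eq_zero (hr : 0 ≤ r) (ha : 0 ≤ a) (hb : 0 ≤ b) (h : a ⊓ b = 0) :
    (r • a) ⊓ b = 0 := by
  set s := max r 1
  have hs : 0 < s := zero_lt_one.trans_le (le_max_right r 1)
  refine le_antisymm ?_ (le_inf (smul_nonneg hr ha) hb)
  calc (r • a) ⊓ b ≤ (s • a) ⊓ (s • b) :=
        inf_le_inf (smul_le_smul_of_nonneg_right (le_max_left r 1) ha)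
          (le_smul_of_one_le_left hb (le_max_right r 1))
    _ = 0 := by rw [← smul_inf_of_pos hs, h, smul_zero]

lemma abs_map_smul_le_of_smul_le (T : A →ₗ[𝕜] A) {u : A} {c : 𝕜} (hu : 0 ≤ u) (hc : 0 ≤ c)
    (h : c • u ≤ u) : |T (c • u)| ≤ |T u| := by
  rcases le_or_gt c 1 with hc1 | hc1
  · rw [map_smul, abs_smul_of_nonneg hc]
    exact smul_le_of_le_one_left (abs_nonneg _) hc1
  · have hu0 : u ≤ 0 := le_of_smul_le_smul_left (a := c - 1)
      (by rw [smul_zero, sub_smul, one_smul]; exact sub_nonpos.2 h) (sub_pos.2 hc1)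
    simp [le_antisymm hu0 hu]

variable (𝕜) in
def disjointCone (g : A) : PointedCone 𝕜 A where
  carrier := {z | 0 ≤ z ∧ z ⊓ |g| = 0}
  add_mem' := fun ⟨ha, hag⟩ ⟨hb, hbg⟩ =>
    ⟨add_nonneg ha hb, add_inf_eq_zero ha hb (abs_nonneg g) hag hbg⟩
  zero_mem' := ⟨le_rfl, inf_eq_left.2 (abs_nonneg g)⟩
  smul_mem' := fun r _ ⟨hz, hzg⟩ =>
    ⟨smul_nonneg r.2 hz, smul_inf_eq_zero r.2 hz (abs_nonneg g) hzg⟩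

lemma mem_disjointCone_of_le {g z w : A} (hz : 0 ≤ z) (hzw : z ≤ w) (hw : w ∈ disjointCone 𝕜 g) :
    z ∈ disjointCone 𝕜 g :=
  ⟨hz, le_antisymm (hw.2 ▸ inf_le_inf_right _ hzw) (le_inf hz (abs_nonneg g))⟩

end VectorLattice

section Components

variable {A : Type*} [AddCommGroup A] [Lattice A] [IsOrderedAddMonoid A] {u e f z : A}

def IsComponent (u e : A) : Prop := 0 ≤ e ∧ e ⊓ (u - e) = 0

namespace IsComponent

lemma le (he : IsComponent u e) : e ≤ u :=
  sub_nonneg.1 (he.2 ▸ inf_le_right)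

lemma sub (he : IsComponent u e) : IsComponent u (u - e) :=
  ⟨sub_nonneg.2 he.le, by rw [sub_sub_cancel, inf_comm, he.2]⟩

lemma inf_add_inf_sub (he : IsComponent u e) (hz : 0 ≤ z) (hzu : z ≤ u) :
    z ⊓ e + z ⊓ (u - e) = z := by
  rw [← inf_add_eq_inf_add_inf hz he.1 he.sub.1 he.2, add_sub_cancel, inf_eq_left.2 hzu]

lemma inf (he : IsComponent u e) (hf : IsComponent u f) : IsComponent f (e ⊓ f) := by
  refine ⟨le_inf he.1 hf.1, le_antisymm ?_ (le_inf (le_inf he.1 hf.1) ?_)⟩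
  · have hfe : f - e ⊓ f = f ⊓ (u - e) := by
      rw [sub_eq_iff_eq_add', inf_comm, he.inf_add_inf_sub hf.1 hf.le]
    rw [hfe, ← he.2]
    exact inf_le_inf inf_le_left inf_le_right
  · exact sub_nonneg.2 inf_le_right

end IsComponent

end Components

section Projection

variable {𝕜 A ι : Type*} [Field 𝕜] [AddCommGroup A] [Lattice A] [IsOrderedAddMonoid A]
  [Module 𝕜 A] {s : Finset ι} {α : ι → 𝕜} {e : ι → A} {u g : A} {c : 𝕜}

namespace IsComponent

lemma smul_add_sum_eq (hg : IsComponent u g) (he : ∀ i ∈ s, IsComponent u (e i)) :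
    c • u + ∑ i ∈ s, α i • e i =
      (c • g + ∑ i ∈ s, α i • (e i ⊓ g)) + (c • (u - g) + ∑ i ∈ s, α i • (e i ⊓ (u - g))) := by
  have hsplit : ∀ i ∈ s, α i • e i = α i • (e i ⊓ g) + α i • (e i ⊓ (u - g)) := fun i hi => by
    rw [← smul_add, hg.inf_add_inf_sub (he i hi).1 (he i hi).le]
  rw [sum_congr rfl hsplit, sum_add_distrib, smul_sub]
  abel

variable [LinearOrder 𝕜] [IsStrictOrderedRing 𝕜] [IsOrderedModule 𝕜 A]

lemma smul_add_sum_inf_mem (hg : IsComponent u g) (hc : 0 ≤ c) (hα : ∀ i ∈ s, 0 ≤ α i)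
    (he : ∀ i ∈ s, 0 ≤ e i) :
    c • g + ∑ i ∈ s, α i • (e i ⊓ g) ∈ disjointCone 𝕜 (u - g) := by
  have hg' : g ∈ disjointCone 𝕜 (u - g) := ⟨hg.1, by rw [abs_of_nonneg hg.sub.1, hg.2]⟩
  exact add_mem (PointedCone.smul_mem _ hc hg') (sum_mem fun i hi => PointedCone.smul_mem _
    (hα i hi) (mem_disjointCone_of_le (le_inf (he i hi) hg.1) inf_le_right hg'))

lemma smul_add_sum_inf_le (hg : IsComponent u g) (hc : 0 ≤ c) (hα : ∀ i ∈ s, 0 ≤ α i)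
    (he : ∀ i ∈ s, IsComponent u (e i)) (hx : c • u + ∑ i ∈ s, α i • e i ≤ u) :
    c • g + ∑ i ∈ s, α i • (e i ⊓ g) ≤ g := by
  have h₁ := hg.smul_add_sum_inf_mem hc hα fun i hi => (he i hi).1
  have h₂ := hg.sub.smul_add_sum_inf_mem hc hα fun i hi => (he i hi).1
  rw [sub_sub_cancel] at h₂
  refine le_of_le_add_of_inf_eq_zero hg.1 hg.sub.1 ?_ (abs_of_nonneg hg.sub.1 ▸ h₁.2)
  calc _ ≤ (c • g + ∑ i ∈ s, α i • (e i ⊓ g)) + (c • (u - g) + ∑ i ∈ s, α i • (e i ⊓ (u - g))) :=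
        le_add_of_nonneg_right h₂.1
    _ = c • u + ∑ i ∈ s, α i • e i := (hg.smul_add_sum_eq he).symm
    _ ≤ u := hx
    _ = g + (u - g) := (add_sub_cancel g u).symm

end IsComponent

end Projection

section BandPreserving

variable {𝕜 A : Type*} [Field 𝕜] [AddCommGroup A] [Lattice A] [Module 𝕜 A]
  {T : A →ₗ[𝕜] A} {u f : A}

def IsBandPreserving (T : A →ₗ[𝕜] A) : Prop :=
  ∀ x y : A, |x| ⊓ |y| = 0 → |T x| ⊓ |y| = 0

namespace IsBandPreserving

lemma abs_map_inf_abs_map_eq_zero (hT : IsBandPreserving T) {x y : A} (h : |x| ⊓ |y| = 0) :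
    |T x| ⊓ |T y| = 0 := by
  rw [inf_comm]
  exact hT y (T x) (by rw [inf_comm]; exact hT x y h)

variable [IsOrderedAddMonoid A]

lemma abs_map_eq_add_of_isComponent (hT : IsBandPreserving T) (hf : IsComponent u f) :
    |T u| = |T f| + |T (u - f)| := by
  have h : |f| ⊓ |u - f| = 0 := by rw [abs_of_nonneg hf.1, abs_of_nonneg hf.sub.1, hf.2]
  rw [← abs_add_eq_add_abs_of_inf_eq_zero (hT.abs_map_inf_abs_map_eq_zero h), ← map_add,
    add_sub_cancel]

theorem abs_map_smul_add_sum_le [LinearOrder 𝕜] [IsStrictOrderedRing 𝕜] [IsOrderedModule 𝕜 A]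
    {ι : Type*} (hT : IsBandPreserving T) {s : Finset ι} {c : 𝕜} {α : ι → 𝕜} {e : ι → A}
    (hu : 0 ≤ u) (hc : 0 ≤ c) (hα : ∀ i ∈ s, 0 ≤ α i) (he : ∀ i ∈ s, IsComponent u (e i))
    (hx : c • u + ∑ i ∈ s, α i • e i ≤ u) :
    |T (c • u + ∑ i ∈ s, α i • e i)| ≤ |T u| := by
  induction s using Finset.cons_induction generalizing u c e with
  | empty => simpa using abs_map_smul_le_of_smul_le T hu hc (by simpa using hx)
  | cons j s hj ih =>
    have hf : IsComponent u (e j) := he j (mem_cons_self j s)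
    have hα' : ∀ i ∈ s, 0 ≤ α i := fun i hi => hα i (mem_cons_of_mem hi)
    have he' : ∀ i ∈ s, IsComponent u (e i) := fun i hi => he i (mem_cons_of_mem hi)
    set x₁ := (c + α j) • e j + ∑ i ∈ s, α i • (e i ⊓ e j)
    set x₂ := c • (u - e j) + ∑ i ∈ s, α i • (e i ⊓ (u - e j))
    have hx₁ : c • e j + ∑ i ∈ cons j s hj, α i • (e i ⊓ e j) = x₁ := by
      rw [sum_cons, inf_idem, ← add_assoc, ← add_smul]
    have hx₂ : c • (u - e j) + ∑ i ∈ cons j s hj, α i • (e i ⊓ (u - e j)) = x₂ := by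
      rw [sum_cons, hf.2, smul_zero, zero_add]
    have hTx₁ : |T x₁| ≤ |T (e j)| :=
      ih hf.1 (add_nonneg hc (hα j (mem_cons_self j s))) hα' (fun i hi => (he' i hi).inf hf)
        (hx₁.symm.trans_le (hf.smul_add_sum_inf_le hc hα he hx))
    have hTx₂ : |T x₂| ≤ |T (u - e j)| :=
      ih hf.sub.1 hc hα' (fun i hi => (he' i hi).inf hf.sub)
        (hx₂.symm.trans_le (hf.sub.smul_add_sum_inf_le hc hα he hx))
    calc |T (c • u + ∑ i ∈ cons j s hj, α i • e i)| = |T x₁ + T x₂| := by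
          rw [hf.smul_add_sum_eq he, hx₁, hx₂, map_add]
      _ ≤ |T x₁| + |T x₂| := abs_add_le _ _
      _ ≤ |T (e j)| + |T (u - e j)| := add_le_add hTx₁ hTx₂
      _ = |T u| := (hT.abs_map_eq_add_of_isComponent hf).symm

end IsBandPreserving

end BandPreserving

theorem freudenthal_band_preserving_order_bounded_general (A : Type*)
    [AddCommGroup A] [Lattice A] [Module ℝ A]
    (hadd : ∀ a b c : A, a ≤ b → a + c ≤ b + c)
    (hsmulpos : ∀ (r : ℝ) (a : A), 0 ≤ r → 0 ≤ a → 0 ≤ r • a)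
    (hfreud : ∀ x u : A, 0 ≤ x → x ≤ u →
      ∃ (k : ℕ) (α : Fin k → ℝ) (e : Fin k → A),
        (∀ i, 0 < α i) ∧ (∀ i, 0 ≤ e i ∧ e i ⊓ (u - e i) = 0) ∧ x = ∑ i, α i • e i)
    (T : A →ₗ[ℝ] A)
    (hbp : ∀ x y : A, |x| ⊓ |y| = 0 → |T x| ⊓ |y| = 0) :
    ∀ s : Set A, (∃ a b : A, s ⊆ Set.Icc a b) → ∃ l u : A, T '' s ⊆ Set.Icc l u := by
  have : IsOrderedAddMonoid A := { add_le_add_left := fun a b h c => hadd a b c h }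
  have : IsOrderedModule ℝ A := .of_smul_nonneg fun r hr a ha => hsmulpos r a hr ha
  rintro s ⟨a, b, hs⟩
  refine ⟨T a - |T (b - a)|, T a + |T (b - a)|, ?_⟩
  rintro _ ⟨x, hx, rfl⟩
  have hxa : x - a ≤ b - a := sub_le_sub_right (hs hx).2 a
  obtain ⟨k, α, e, hα, he, hsum⟩ := hfreud (x - a) (b - a) (sub_nonneg.2 (hs hx).1) hxa
  have hT : |T x - T a| ≤ |T (b - a)| := by
    simpa [← hsum] using IsBandPreserving.abs_map_smul_add_sum_le hbp (s := univ) (c := 0)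
      ((sub_nonneg.2 (hs hx).1).trans hxa) le_rfl (fun i _ => (hα i).le) (fun i _ => he i)
      (by simpa [← hsum] using hxa)
  obtain ⟨h₁, h₂⟩ := abs_le'.1 hT
  exact ⟨by rw [neg_sub] at h₂; exact sub_le_comm.1 h₂, sub_le_iff_le_add'.1 h₁⟩

/-- Let `A` be a Freudenthal (hyper-Archimedean) vector lattice: an
Archimedean real vector lattice such that whenever `0 ≤ x ≤ u` in `A` there exist finitely
many positive reals `α₁,…,α_k` and components `e₁,…,e_k` of `u` (i.e. `eᵢ ⊓ (u − eᵢ) = 0`)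
with `x = Σᵢ αᵢ • eᵢ`. Then every band preserving linear operator `T : A → A` is order
bounded; that is, every Freudenthal vector lattice is a Wickstead space. -/
theorem freudenthal_band_preserving_order_bounded (A : Type*)
    [AddCommGroup A] [Lattice A] [Module ℝ A]
    (hadd : ∀ a b c : A, a ≤ b → a + c ≤ b + c)
    (hsmulpos : ∀ (r : ℝ) (a : A), 0 ≤ r → 0 ≤ a → 0 ≤ r • a)
    (harch : ∀ a b : A, 0 ≤ a → 0 ≤ b → (∀ n : ℕ, n • a ≤ b) → a = 0)
    (hfreud : ∀ x u : A, 0 ≤ x → x ≤ u →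
      ∃ (k : ℕ) (α : Fin k → ℝ) (e : Fin k → A),
        (∀ i, 0 < α i) ∧ (∀ i, 0 ≤ e i ∧ e i ⊓ (u - e i) = 0) ∧ x = ∑ i, α i • e i)
    (T : A →ₗ[ℝ] A)
    (hbp : ∀ x y : A, |x| ⊓ |y| = 0 → |T x| ⊓ |y| = 0) :
    ∀ s : Set A, (∃ a b : A, s ⊆ Set.Icc a b) → ∃ l u : A, T '' s ⊆ Set.Icc l u :=
  freudenthal_band_preserving_order_bounded_general A hadd hsmulpos hfreud T hbp
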